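/- Let n be a natural number, c, ĉ ∈ ℝⁿ with ĉⱼ ≥ 0 for all j, 0 ≤ Γ₀ ≤ n, and x ∈ ℝⁿ. Define the robust objective F(x) := Σⱼ cⱼ xⱼ + max { Σⱼ uⱼ ĉⱼ |xⱼ| : 0 ≤ u ≤ 1, Σⱼ uⱼ ≤ Γ₀ }. Then F(x) = min { Σⱼ cⱼ xⱼ + z·Γ₀ + Σⱼ p₀ⱼ : z ≥ 0, p₀ⱼ ≥ 0, yⱼ ≥ 0, −yⱼ ≤ xⱼ ≤ yⱼ, and z + p₀ⱼ ≥ ĉⱼ yⱼ for all j }, and consequently Σⱼ cⱼ xⱼ ≤ F(x) ≤ Σⱼ cⱼ xⱼ + Σⱼ ĉⱼ |xⱼ|. -/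

import Mathlib

/-! With weights `a j = chat j * |x j|`, the maximum is a fractional knapsack LP and the
linearization is its dual. Weak duality holds because `|x j| ≤ y j` gives `a j ≤ z + p₀ j`.
For the reverse inequality, sort the weights decreasingly, spend the budget `Γ₀` greedily
(a full unit on each of the first `⌊Γ₀⌋` weights, the fractional part on the next), and let `z`
be the weight where the budget runs out and `p₀ j = max (a j - z) 0`: complementary slackness
then makes the primal and dual values equal. -/

open Finset

def greedyFill (Γ : ℝ) (i : ℕ) : ℝ := min 1 (max 0 (Γ - i))

namespace greedyFill

variable {Γ : ℝ} {i : ℕ}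

theorem nonneg : 0 ≤ greedyFill Γ i := le_min zero_le_one (le_max_left _ _)

theorem le_one : greedyFill Γ i ≤ 1 := min_le_left _ _

theorem eq_one (h : (i : ℝ) + 1 ≤ Γ) : greedyFill Γ i = 1 :=
  min_eq_left (le_max_of_le_right (by linarith))

theorem eq_zero (h : Γ ≤ i) : greedyFill Γ i = 0 := by
  simp [greedyFill, max_eq_left (sub_nonpos.2 h)]

theorem sum_range (hΓ : 0 ≤ Γ) (n : ℕ) : ∑ i ∈ range n, greedyFill Γ i = min (n : ℝ) Γ := by
  induction n with
  | zero => simp [hΓ]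
  | succ n ih =>
    rw [sum_range_succ, ih]
    push_cast
    rcases le_or_gt ((n : ℝ) + 1) Γ with h | h
    · rw [eq_one h, min_eq_left (by linarith), min_eq_left h]
    rcases le_or_gt Γ n with h' | h'
    · rw [eq_zero h', min_eq_right h', min_eq_right (by linarith), add_zero]
    · simp [greedyFill, min_eq_right h.le, min_eq_left h'.le,
        max_eq_right (by linarith : 0 ≤ Γ - n), min_eq_right (by linarith : Γ - n ≤ 1)]

end greedyFill

theorem exists_threshold_of_antitone {n : ℕ} {b : Fin n → ℝ} (hb : Antitone b)
    (hb0 : ∀ i, 0 ≤ b i) {Γ : ℝ} (hΓ : 0 ≤ Γ) :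
    ∃ z, 0 ≤ z ∧ z * min (n : ℝ) Γ = z * Γ ∧
      ∀ i, (z < b i → greedyFill Γ i = 1) ∧ (b i < z → greedyFill Γ i = 0) := by
  have hfloor := Nat.floor_le hΓ
  have hfloor' := Nat.lt_floor_add_one Γ
  by_cases hk : ⌊Γ⌋₊ < n
  · have hkn : ((⌊Γ⌋₊ : ℕ) : ℝ) + 1 ≤ n := by exact_mod_cast hk
    refine ⟨b ⟨⌊Γ⌋₊, hk⟩, hb0 _, by rw [min_eq_right (by linarith)],
      fun i => ⟨fun h => ?_, fun h => ?_⟩⟩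
    · have hi : (i : ℕ) + 1 ≤ ⌊Γ⌋₊ := hb.reflect_lt h
      exact greedyFill.eq_one ((by exact_mod_cast hi : ((i : ℕ) : ℝ) + 1 ≤ ⌊Γ⌋₊).trans hfloor)
    · have hi : ⌊Γ⌋₊ + 1 ≤ (i : ℕ) := hb.reflect_lt h
      exact greedyFill.eq_zero (hfloor'.le.trans (by exact_mod_cast hi))
  · have hnΓ : (n : ℝ) ≤ Γ := (Nat.cast_le.2 (not_lt.1 hk)).trans hfloor
    refine ⟨0, le_rfl, by simp,
      fun i => ⟨fun _ => greedyFill.eq_one ?_, fun h => absurd h (not_lt.2 (hb0 i))⟩⟩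
    exact (by exact_mod_cast i.isLt : ((i : ℕ) : ℝ) + 1 ≤ n).trans hnΓ

section Duality

variable {ι : Type*} [Fintype ι] {a u p : ι → ℝ} {z Γ : ℝ}

theorem sum_mul_le_dual_objective (hu : ∀ j, 0 ≤ u j ∧ u j ≤ 1) (huΓ : ∑ j, u j ≤ Γ)
    (hz : 0 ≤ z) (hp : ∀ j, 0 ≤ p j) (hap : ∀ j, a j ≤ z + p j) :
    ∑ j, u j * a j ≤ z * Γ + ∑ j, p j :=
  calc ∑ j, u j * a j ≤ ∑ j, (u j * z + p j) := sum_le_sum fun j _ => by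
        nlinarith [hu j, hp j, hap j]
    _ = (∑ j, u j) * z + ∑ j, p j := by rw [sum_add_distrib, sum_mul]
    _ ≤ z * Γ + ∑ j, p j := by nlinarith

theorem sum_mul_eq_dual_objective_of_complementary (hz : z * ∑ j, u j = z * Γ)
    (hcs : ∀ j, (z < a j → u j = 1) ∧ (a j < z → u j = 0)) :
    ∑ j, u j * a j = z * Γ + ∑ j, max (a j - z) 0 := by
  have hterm : ∀ j, u j * a j = z * u j + max (a j - z) 0 := fun j => by
    rcases lt_trichotomy (a j) z with h | h | h
    · simp [(hcs j).2 h, max_eq_right (sub_nonpos.2 h.le)]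
    · simp [h, mul_comm]
    · simp [(hcs j).1 h, max_eq_left (sub_nonneg.2 h.le)]
  rw [sum_congr rfl fun j _ => hterm j, sum_add_distrib, ← mul_sum, hz]

end Duality

theorem exists_budgeted_selection_eq_dual_objective {n : ℕ} {a : Fin n → ℝ} (ha : ∀ j, 0 ≤ a j)
    {Γ : ℝ} (hΓ : 0 ≤ Γ) :
    ∃ (z : ℝ) (u : Fin n → ℝ), 0 ≤ z ∧ (∀ j, 0 ≤ u j ∧ u j ≤ 1) ∧ ∑ j, u j ≤ Γ ∧
      ∑ j, u j * a j = z * Γ + ∑ j, max (a j - z) 0 := by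
  set σ : Equiv.Perm (Fin n) := Fin.revPerm.trans (Tuple.sort a)
  have hanti : Antitone (a ∘ σ) := fun i j hij => by
    simpa [σ] using Tuple.monotone_sort a (Fin.rev_le_rev.2 hij)
  obtain ⟨z, hz, hzΓ, hcs⟩ := exists_threshold_of_antitone hanti (fun i => ha _) hΓ
  set u : Fin n → ℝ := fun j => greedyFill Γ (σ.symm j)
  have hsum : ∑ j, u j = min (n : ℝ) Γ := by
    rw [← Equiv.sum_comp σ]
    simpa [u] using (Fin.sum_univ_eq_sum_range (greedyFill Γ) n).trans (greedyFill.sum_range hΓ n)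
  refine ⟨z, u, hz, fun j => ⟨greedyFill.nonneg, greedyFill.le_one⟩, hsum ▸ min_le_right _ _,
    sum_mul_eq_dual_objective_of_complementary (hsum ▸ hzΓ) fun j => ?_⟩
  simpa [u] using hcs (σ.symm j)

theorem robust_objective_linearization_general
    (n : ℕ) (c chat : Fin n → ℝ) (hchat : ∀ j, 0 ≤ chat j)
    (Γ₀ : ℝ) (x : Fin n → ℝ)
    (β F : ℝ)
    (hβ : IsGreatest
      { s : ℝ | ∃ u : Fin n → ℝ, (∀ j, 0 ≤ u j ∧ u j ≤ 1) ∧ (∑ j, u j) ≤ Γ₀ ∧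
          s = ∑ j, u j * (chat j * |x j|) } β)
    (hF : F = ∑ j, c j * x j + β) :
    IsLeast
      { s : ℝ | ∃ (z : ℝ) (p₀ y : Fin n → ℝ), 0 ≤ z ∧
          (∀ j, 0 ≤ p₀ j ∧ 0 ≤ y j ∧ -y j ≤ x j ∧ x j ≤ y j ∧
            chat j * y j ≤ z + p₀ j) ∧
          s = ∑ j, c j * x j + z * Γ₀ + ∑ j, p₀ j } F ∧
    (∑ j, c j * x j ≤ F ∧ F ≤ ∑ j, c j * x j + ∑ j, chat j * |x j|) := by
  obtain ⟨⟨u₀, hu₀, hu₀Γ, hβu₀⟩, hβmax⟩ := hβ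
  have hΓ₀ : 0 ≤ Γ₀ := (sum_nonneg fun j _ => (hu₀ j).1).trans hu₀Γ
  have weak_duality : ∀ z (p₀ y : Fin n → ℝ), 0 ≤ z →
      (∀ j, 0 ≤ p₀ j ∧ 0 ≤ y j ∧ -y j ≤ x j ∧ x j ≤ y j ∧ chat j * y j ≤ z + p₀ j) →
      β ≤ z * Γ₀ + ∑ j, p₀ j := fun z p₀ y hz h => hβu₀ ▸
    sum_mul_le_dual_objective hu₀ hu₀Γ hz (fun j => (h j).1) fun j =>
      (mul_le_mul_of_nonneg_left (abs_le.2 ⟨(h j).2.2.1, (h j).2.2.2.1⟩) (hchat j)).trans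
        (h j).2.2.2.2
  obtain ⟨z, u, hz, hu, huΓ, hval⟩ := exists_budgeted_selection_eq_dual_objective
    (fun j => mul_nonneg (hchat j) (abs_nonneg (x j))) hΓ₀
  have hfeas : ∀ j, 0 ≤ max (chat j * |x j| - z) 0 ∧ 0 ≤ |x j| ∧ -|x j| ≤ x j ∧ x j ≤ |x j| ∧
      chat j * |x j| ≤ z + max (chat j * |x j| - z) 0 := fun j =>
    ⟨le_max_right _ _, abs_nonneg _, neg_abs_le _, le_abs_self _,
      by linarith [le_max_left (chat j * |x j| - z) 0]⟩
  have hβz : β = z * Γ₀ + ∑ j, max (chat j * |x j| - z) 0 :=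
    le_antisymm (weak_duality _ _ _ hz hfeas) (hval ▸ hβmax ⟨u, hu, huΓ, rfl⟩)
  have hβ0 : 0 ≤ β := hβmax ⟨0, fun _ => ⟨le_rfl, zero_le_one⟩, by simpa using hΓ₀, by simp⟩
  have hβsoyster : β ≤ 0 * Γ₀ + ∑ j, chat j * |x j| :=
    weak_duality 0 _ _ le_rfl fun j =>
      ⟨mul_nonneg (hchat j) (abs_nonneg _), abs_nonneg _, neg_abs_le _, le_abs_self _, by simp⟩
  subst hF
  refine ⟨⟨⟨z, _, _, hz, hfeas, by rw [hβz, add_assoc]⟩, ?_⟩, by linarith, by linarith⟩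
  rintro _ ⟨z', p', y', hz', h', rfl⟩
  linarith [weak_duality z' p' y' hz' h']

/-- The Bertsimas–Sim robust objective
`F(x) = ∑ j, c j * x j + max { ∑ j, u j * (chat j * |x j|) : 0 ≤ u ≤ 1, ∑ u ≤ Γ₀ }`
equals the minimum of its exact linearization
`∑ j, c j * x j + z * Γ₀ + ∑ j, p₀ j` over `z ≥ 0`, `p₀ ≥ 0`, `y ≥ 0` with
`-y j ≤ x j ≤ y j` and `z + p₀ j ≥ chat j * y j` (the minimum being attained),
and it lies between the nominal objective `∑ j, c j * x j` and the fully
protected Soyster objective `∑ j, c j * x j + ∑ j, chat j * |x j|`. -/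
theorem robust_objective_linearization
    (n : ℕ) (c chat : Fin n → ℝ) (hchat : ∀ j, 0 ≤ chat j)
    (Γ₀ : ℝ) (hΓ0 : 0 ≤ Γ₀) (hΓn : Γ₀ ≤ (n : ℝ)) (x : Fin n → ℝ)
    (β F : ℝ)
    (hβ : IsGreatest
      { s : ℝ | ∃ u : Fin n → ℝ, (∀ j, 0 ≤ u j ∧ u j ≤ 1) ∧ (∑ j, u j) ≤ Γ₀ ∧
          s = ∑ j, u j * (chat j * |x j|) } β)
    (hF : F = ∑ j, c j * x j + β) :
    IsLeast
      { s : ℝ | ∃ (z : ℝ) (p₀ y : Fin n → ℝ), 0 ≤ z ∧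
          (∀ j, 0 ≤ p₀ j ∧ 0 ≤ y j ∧ -y j ≤ x j ∧ x j ≤ y j ∧
            chat j * y j ≤ z + p₀ j) ∧
          s = ∑ j, c j * x j + z * Γ₀ + ∑ j, p₀ j } F ∧
    (∑ j, c j * x j ≤ F ∧ F ≤ ∑ j, c j * x j + ∑ j, chat j * |x j|) :=
  robust_objective_linearization_general n c chat hchat Γ₀ x β F hβ hF
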